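/- Let n ≥ 2 be an integer, γ > 1, θ ≥ 2, 0 ≤ α < n/γ, ε₀ ∈ (0,1) and C₁ > 0. Let Ω ⊆ ℝⁿ be measurable and let F, G : Ω → [0,∞) be measurable functions such that for every ε ∈ (0,ε₀) and every λ > 0, L^n({ζ ∈ Ω : F(ζ) > ε^{α/n − 1/γ} λ and G(ζ) ≤ ε^{θ(1 − 1/γ)} λ}) ≤ C₁ ε L^n({ζ ∈ Ω : F(ζ) > λ}). Then for every 0 < q < nγ/(n − αγ) and every 0 < s < ∞ there exists a constant C₂ > 0, depending only on n, α, γ, θ, ε₀, C₁, q and s, such that if ‖F‖_{L^{q,s}(Ω)} < ∞ then ‖F‖_{L^{q,s}(Ω)} ≤ C₂ ‖G‖_{L^{q,s}(Ω)}. (Good-λ level-set inequalities imply Lorentz norm bounds; this is the derivation of Theorem 1.2 from Theorem 1.1.) -/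

import Mathlib

open MeasureTheory ENNReal

/-- The Lorentz quasinorm
`‖h‖_{L^{q,s}(Ω)} = (q ∫_0^∞ τ^s L^n({ζ ∈ Ω : |h(ζ)| > τ})^{s/q} dτ/τ)^{1/s}`,
valued in `ℝ≥0∞`. -/
noncomputable def lorentzNorm {n : ℕ} (Ω : Set (EuclideanSpace ℝ (Fin n))) (q s : ℝ)
    (h : EuclideanSpace ℝ (Fin n) → ℝ) : ℝ≥0∞ :=
  (ENNReal.ofReal q *
      ∫⁻ τ in Set.Ioi (0 : ℝ),
        ENNReal.ofReal (τ ^ (s - 1)) * volume {ζ ∈ Ω | τ < |h ζ|} ^ (s / q)) ^ (1 / s)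

/-- The Marcinkiewicz (weak Lebesgue) quasinorm
`‖h‖_{L^{q,∞}(Ω)} = sup_{τ>0} τ L^n({ζ ∈ Ω : |h(ζ)| > τ})^{1/q}`, valued in `ℝ≥0∞`. -/
noncomputable def weakLorentzNorm {n : ℕ} (Ω : Set (EuclideanSpace ℝ (Fin n))) (q : ℝ)
    (h : EuclideanSpace ℝ (Fin n) → ℝ) : ℝ≥0∞ :=
  ⨆ (τ : ℝ) (_ : 0 < τ), ENNReal.ofReal τ * volume {ζ ∈ Ω | τ < |h ζ|} ^ (1 / q)

/-!
The good-λ inequality splits `{F > ε^(α/n - 1/γ) λ}` into its part where `G ≤ ε^(θ(1-1/γ)) λ`,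
of measure at most `C₁ ε |{F > λ}|`, and `{G > ε^(θ(1-1/γ)) λ}`. Raising to the power `r = s/q`,
integrating against `λ^(s-1) dλ` and rescaling `λ` turns this into
`I(F) ≤ 2^r (C₁ ε)^r ε^((α/n - 1/γ) s) I(F) + C(ε) I(G)` for `I(h) = q⁻¹ ‖h‖_{L^{q,s}}^s`.
The exponent `(α/n - 1/γ) s + s/q` is positive exactly when `q < nγ/(n - αγ)`, so for `ε` small
the coefficient of `I(F)` is at most `1/2`, and it can be absorbed because `I(F) < ∞`.
-/

open Set Filter Topology

theorem one_div_sub_div_lt_one_div {n γ α q : ℝ} (hn : 0 < n) (hγ : 0 < γ) (hq : 0 < q)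
    (hα : α < n / γ) (hqlt : q < n * γ / (n - α * γ)) : 1 / γ - α / n < 1 / q := by
  have hαγ : α * γ < n := (lt_div_iff₀ hγ).1 hα
  have : q * (n - α * γ) < n * γ := (lt_div_iff₀ (by linarith)).1 hqlt
  rw [div_sub_div _ _ hγ.ne' hn.ne', div_lt_div_iff₀ (by positivity) hq]
  nlinarith

theorem exists_mem_Ioo_mul_rpow_le (K : ℝ) {p δ η : ℝ} (hp : 0 < p) (hδ : 0 < δ) (hη : 0 < η) :
    ∃ ε ∈ Ioo 0 δ, K * ε ^ p ≤ η := by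
  have hlim : Tendsto (fun ε : ℝ ↦ K * ε ^ p) (𝓝[>] 0) (𝓝 0) := by
    simpa [Real.zero_rpow hp.ne'] using
      (((Real.continuous_rpow_const hp.le).tendsto 0).const_mul K).mono_left nhdsWithin_le_nhds
  exact (Filter.Eventually.and (Ioo_mem_nhdsGT hδ) (hlim.eventually (ge_mem_nhds hη))).exists

theorem ENNReal.add_rpow_le_two_rpow_mul (x y : ℝ≥0∞) {r : ℝ} (hr : 0 ≤ r) :
    (x + y) ^ r ≤ 2 ^ r * (x ^ r + y ^ r) := by
  calc (x + y) ^ r ≤ (2 * max x y) ^ r := by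
        gcongr
        rw [two_mul]
        exact add_le_add (le_max_left x y) (le_max_right x y)
    _ = 2 ^ r * max x y ^ r := ENNReal.mul_rpow_of_nonneg _ _ hr
    _ ≤ 2 ^ r * (x ^ r + y ^ r) := by
        gcongr
        rcases le_total x y with h | h
        · rw [max_eq_right h]; exact le_add_self
        · rw [max_eq_left h]; exact le_self_add

theorem ENNReal.le_two_mul_of_le_mul_add {x a y : ℝ≥0∞} (hx : x ≠ ⊤) (ha : a ≤ 2⁻¹)
    (h : x ≤ a * x + y) : x ≤ 2 * y := by
  have hhalf : 2⁻¹ * x ≠ ⊤ := ENNReal.mul_ne_top (by simp) hx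
  have h2 : 2⁻¹ * x + 2⁻¹ * x ≤ 2⁻¹ * x + y := by
    rw [← add_mul, ENNReal.inv_two_add_inv_two, one_mul]
    exact h.trans (by gcongr)
  calc x = 2 * (2⁻¹ * x) := by
        rw [← mul_assoc, ENNReal.mul_inv_cancel two_ne_zero ofNat_ne_top, one_mul]
    _ ≤ 2 * y := by gcongr; exact (ENNReal.add_le_add_iff_left hhalf).1 h2

theorem lintegral_Ioi_comp_mul_left (g : ℝ → ℝ≥0∞) {A : ℝ} (hA : 0 < A) :
    ∫⁻ t in Ioi 0, g (A * t) = ENNReal.ofReal A⁻¹ * ∫⁻ t in Ioi 0, g t := by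
  have hemb : MeasurableEmbedding (A * ·) :=
    (Homeomorph.mulLeft₀ A hA.ne').measurableEmbedding
  rw [← smul_eq_mul, ← lintegral_smul_measure, ← Measure.restrict_smul,
    ← abs_of_pos (inv_pos.2 hA), ← Real.map_volume_mul_left hA.ne', hemb.restrict_map,
    hemb.lintegral_map, preimage_const_mul_Ioi₀ _ hA, zero_div]

noncomputable def lorentzIntegral (s r : ℝ) (φ : ℝ → ℝ≥0∞) : ℝ≥0∞ :=
  ∫⁻ τ in Ioi 0, ENNReal.ofReal (τ ^ (s - 1)) * φ τ ^ r

section LorentzIntegral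
variable {s r : ℝ}

theorem lorentzIntegral_comp_mul_left (φ : ℝ → ℝ≥0∞) {A : ℝ} (hA : 0 < A) :
    lorentzIntegral s r (fun t ↦ φ (A * t)) =
      ENNReal.ofReal (A ^ (-s)) * lorentzIntegral s r φ := by
  have hsubst := lintegral_Ioi_comp_mul_left (fun t ↦ ENNReal.ofReal (t ^ (s - 1)) * φ t ^ r) hA
  have hpull : ∫⁻ t in Ioi 0, ENNReal.ofReal ((A * t) ^ (s - 1)) * φ (A * t) ^ r =
      ENNReal.ofReal (A ^ (s - 1)) * lorentzIntegral s r (fun t ↦ φ (A * t)) := by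
    rw [lorentzIntegral, ← lintegral_const_mul' _ _ ofReal_ne_top]
    refine setLIntegral_congr_fun measurableSet_Ioi fun t ht ↦ ?_
    rw [Real.mul_rpow hA.le ht.le, ENNReal.ofReal_mul (by positivity), mul_assoc]
  have hcancel : ENNReal.ofReal (A ^ (1 - s)) * ENNReal.ofReal (A ^ (s - 1)) = 1 := by
    rw [← ENNReal.ofReal_mul (by positivity), ← Real.rpow_add hA]
    simp
  calc lorentzIntegral s r (fun t ↦ φ (A * t))
      = ENNReal.ofReal (A ^ (1 - s)) * (ENNReal.ofReal (A ^ (s - 1)) *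
          lorentzIntegral s r (fun t ↦ φ (A * t))) := by rw [← mul_assoc, hcancel, one_mul]
    _ = ENNReal.ofReal (A ^ (1 - s) * A⁻¹) * lorentzIntegral s r φ := by
        rw [← hpull, hsubst, ← mul_assoc, ENNReal.ofReal_mul (by positivity), lorentzIntegral]
    _ = ENNReal.ofReal (A ^ (-s)) * lorentzIntegral s r φ := by
        rw [← Real.rpow_neg_one, ← Real.rpow_add hA]
        ring_nf

theorem lorentzIntegral_comp_le_of_goodLambda {φ ψ : ℝ → ℝ≥0∞} (hφ : Measurable φ)
    (hr : 0 ≤ r) {A B : ℝ} (hA : 0 < A) (hB : 0 < B) {c : ℝ≥0∞}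
    (hgood : ∀ t > 0, φ (A * t) ≤ c * φ t + ψ (B * t)) :
    ENNReal.ofReal (A ^ (-s)) * lorentzIntegral s r φ ≤
      2 ^ r * c ^ r * lorentzIntegral s r φ +
        2 ^ r * ENNReal.ofReal (B ^ (-s)) * lorentzIntegral s r ψ := by
  have hpt : ∀ t ∈ Ioi (0 : ℝ), ENNReal.ofReal (t ^ (s - 1)) * φ (A * t) ^ r ≤
      2 ^ r * c ^ r * (ENNReal.ofReal (t ^ (s - 1)) * φ t ^ r) +
        2 ^ r * (ENNReal.ofReal (t ^ (s - 1)) * ψ (B * t) ^ r) := fun t ht ↦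
    calc ENNReal.ofReal (t ^ (s - 1)) * φ (A * t) ^ r
        ≤ ENNReal.ofReal (t ^ (s - 1)) * (2 ^ r * ((c * φ t) ^ r + ψ (B * t) ^ r)) := by
          gcongr
          exact (ENNReal.rpow_le_rpow (hgood t ht) hr).trans
            (ENNReal.add_rpow_le_two_rpow_mul _ _ hr)
      _ = _ := by rw [ENNReal.mul_rpow_of_nonneg _ _ hr]; ring
  have hφr : Measurable fun t : ℝ ↦ ENNReal.ofReal (t ^ (s - 1)) * φ t ^ r :=
    (measurable_id.pow_const _).ennreal_ofReal.mul (hφ.pow_const r)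
  calc ENNReal.ofReal (A ^ (-s)) * lorentzIntegral s r φ
      = lorentzIntegral s r (fun t ↦ φ (A * t)) := (lorentzIntegral_comp_mul_left φ hA).symm
    _ ≤ ∫⁻ t in Ioi 0, (2 ^ r * c ^ r * (ENNReal.ofReal (t ^ (s - 1)) * φ t ^ r) +
          2 ^ r * (ENNReal.ofReal (t ^ (s - 1)) * ψ (B * t) ^ r)) :=
        setLIntegral_mono' measurableSet_Ioi hpt
    _ = 2 ^ r * c ^ r * lorentzIntegral s r φ +
          2 ^ r * lorentzIntegral s r (fun t ↦ ψ (B * t)) := by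
        rw [lintegral_add_left (hφr.const_mul _), lintegral_const_mul _ hφr,
          lintegral_const_mul' _ _ (by simp), lorentzIntegral, lorentzIntegral]
    _ = _ := by rw [lorentzIntegral_comp_mul_left ψ hB]; ring

theorem lorentzIntegral_le_of_goodLambda {φ ψ : ℝ → ℝ≥0∞} (hφ : Measurable φ)
    (hr : 0 ≤ r) {A B c : ℝ} (hA : 0 < A) (hB : 0 < B) (hc : 0 ≤ c)
    (hgood : ∀ t > 0, φ (A * t) ≤ ENNReal.ofReal c * φ t + ψ (B * t))
    (hsmall : A ^ s * 2 ^ r * c ^ r ≤ 1 / 2) (hfin : lorentzIntegral s r φ ≠ ⊤) :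
    lorentzIntegral s r φ ≤
      ENNReal.ofReal (2 * (A ^ s * 2 ^ r * B ^ (-s))) * lorentzIntegral s r ψ := by
  have hcancel : ENNReal.ofReal (A ^ s) * ENNReal.ofReal (A ^ (-s)) = 1 := by
    rw [← ENNReal.ofReal_mul (by positivity), ← Real.rpow_add hA]
    simp
  have htwo : (2 : ℝ≥0∞) ^ r = ENNReal.ofReal (2 ^ r) := by
    rw [← ENNReal.ofReal_rpow_of_nonneg zero_le_two hr, ENNReal.ofReal_ofNat]
  have habsorb : lorentzIntegral s r φ ≤
      ENNReal.ofReal (A ^ s * 2 ^ r * c ^ r) * lorentzIntegral s r φ +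
        ENNReal.ofReal (A ^ s * 2 ^ r * B ^ (-s)) * lorentzIntegral s r ψ := by
    calc lorentzIntegral s r φ
        = ENNReal.ofReal (A ^ s) * (ENNReal.ofReal (A ^ (-s)) * lorentzIntegral s r φ) := by
          rw [← mul_assoc, hcancel, one_mul]
      _ ≤ ENNReal.ofReal (A ^ s) * (2 ^ r * ENNReal.ofReal c ^ r * lorentzIntegral s r φ +
            2 ^ r * ENNReal.ofReal (B ^ (-s)) * lorentzIntegral s r ψ) := by
          gcongr; exact lorentzIntegral_comp_le_of_goodLambda hφ hr hA hB hgood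
      _ = _ := by
          rw [htwo, ENNReal.ofReal_rpow_of_nonneg hc hr, ENNReal.ofReal_mul (by positivity),
            ENNReal.ofReal_mul (by positivity), ENNReal.ofReal_mul (by positivity),
            ENNReal.ofReal_mul (by positivity)]
          ring
  rw [ENNReal.ofReal_mul zero_le_two, ENNReal.ofReal_ofNat, mul_assoc]
  refine ENNReal.le_two_mul_of_le_mul_add hfin ?_ habsorb
  rw [← ENNReal.ofReal_ofNat 2, ← ENNReal.ofReal_inv_of_pos two_pos]
  exact ENNReal.ofReal_le_ofReal (by linarith)

end LorentzIntegral

def distributionFunction {X : Type*} [MeasureSpace X] (Ω : Set X) (h : X → ℝ) (τ : ℝ) : ℝ≥0∞ :=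
  volume {ζ ∈ Ω | τ < |h ζ|}

theorem distributionFunction_antitone {X : Type*} [MeasureSpace X] (Ω : Set X) (h : X → ℝ) :
    Antitone (distributionFunction Ω h) := fun _ _ hτ ↦
  measure_mono fun _ hζ ↦ ⟨hζ.1, hτ.trans_lt hζ.2⟩

theorem distributionFunction_le_of_goodLambda {X : Type*} [MeasureSpace X] {Ω : Set X}
    {F G : X → ℝ} (hF0 : ∀ x, 0 ≤ F x) {a b lam : ℝ} {c : ℝ≥0∞}
    (hgood : volume {ζ ∈ Ω | a < F ζ ∧ G ζ ≤ b} ≤ c * volume {ζ ∈ Ω | lam < F ζ}) :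
    distributionFunction Ω F a ≤
      c * distributionFunction Ω F lam + distributionFunction Ω G b := by
  simp only [distributionFunction, abs_of_nonneg (hF0 _)]
  calc volume {ζ ∈ Ω | a < F ζ}
      ≤ volume ({ζ ∈ Ω | a < F ζ ∧ G ζ ≤ b} ∪ {ζ ∈ Ω | b < |G ζ|}) :=
        measure_mono fun ζ hζ ↦ by
          rcases le_or_gt (G ζ) b with h | h
          · exact Or.inl ⟨hζ.1, hζ.2, h⟩
          · exact Or.inr ⟨hζ.1, h.trans_le (le_abs_self _)⟩
    _ ≤ _ := (measure_union_le _ _).trans (by gcongr)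

section LorentzNorm
variable {n : ℕ} {Ω : Set (EuclideanSpace ℝ (Fin n))} {q s : ℝ}

theorem lorentzNorm_eq (h : EuclideanSpace ℝ (Fin n) → ℝ) :
    lorentzNorm Ω q s h =
      (ENNReal.ofReal q * lorentzIntegral s (s / q) (distributionFunction Ω h)) ^ (1 / s) :=
  rfl

theorem lorentzIntegral_ne_top_of_lorentzNorm_ne_top {h : EuclideanSpace ℝ (Fin n) → ℝ}
    (hq : 0 < q) (hs : 0 < s) (hfin : lorentzNorm Ω q s h ≠ ⊤) :
    lorentzIntegral s (s / q) (distributionFunction Ω h) ≠ ⊤ := fun htop ↦ hfin <| by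
  rw [lorentzNorm_eq, htop, ENNReal.mul_top (by simpa using hq),
    ENNReal.top_rpow_of_pos (by positivity)]

theorem lorentzNorm_le_of_lorentzIntegral_le {F G : EuclideanSpace ℝ (Fin n) → ℝ} {K : ℝ}
    (hs : 0 < s) (hK : 0 ≤ K)
    (h : lorentzIntegral s (s / q) (distributionFunction Ω F) ≤
      ENNReal.ofReal K * lorentzIntegral s (s / q) (distributionFunction Ω G)) :
    lorentzNorm Ω q s F ≤ ENNReal.ofReal (K ^ (1 / s)) * lorentzNorm Ω q s G := by
  rw [lorentzNorm_eq, lorentzNorm_eq, ← ENNReal.ofReal_rpow_of_nonneg hK (by positivity),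
    ← ENNReal.mul_rpow_of_nonneg _ _ (by positivity), mul_left_comm]
  gcongr

end LorentzNorm

theorem goodLambda_to_lorentz_general (n : ℕ) (hn : 2 ≤ n) (γ θ α ε₀ C₁ : ℝ)
    (hγ : 1 < γ) (hα : α < n / γ)
    (hε₀ : ε₀ ∈ Set.Ioo (0 : ℝ) 1) (hC₁ : 0 < C₁)
    (Ω : Set (EuclideanSpace ℝ (Fin n)))
    (F G : EuclideanSpace ℝ (Fin n) → ℝ) (hF0 : ∀ x, 0 ≤ F x)
    (hgood : ∀ ε ∈ Set.Ioo (0 : ℝ) ε₀, ∀ lam : ℝ, 0 < lam →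
      volume {ζ ∈ Ω | ε ^ (α / n - 1 / γ) * lam < F ζ ∧ G ζ ≤ ε ^ (θ * (1 - 1 / γ)) * lam}
        ≤ ENNReal.ofReal (C₁ * ε) * volume {ζ ∈ Ω | lam < F ζ}) :
    ∀ q s : ℝ, 0 < q → q < n * γ / (n - α * γ) → 0 < s →
      ∃ C₂ : ℝ, 0 < C₂ ∧
        (lorentzNorm Ω q s F ≠ ⊤ →
          lorentzNorm Ω q s F ≤ ENNReal.ofReal C₂ * lorentzNorm Ω q s G) := by
  intro q s hq hqlt hs
  have hn0 : (0 : ℝ) < n := by exact_mod_cast (show 0 < n by omega)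
  have hexp : 0 < (α / n - 1 / γ) * s + s / q := by
    have hrw : (α / n - 1 / γ) * s + s / q = s * (1 / q - (1 / γ - α / n)) := by ring
    rw [hrw]
    exact mul_pos hs (sub_pos.2 (one_div_sub_div_lt_one_div hn0 (by linarith) hq hα hqlt))
  obtain ⟨ε, hε, hεp⟩ :=
    exists_mem_Ioo_mul_rpow_le ((2 * C₁) ^ (s / q)) hexp hε₀.1 one_half_pos
  have hε0 : 0 < ε := hε.1
  have hcoeff : (ε ^ (α / n - 1 / γ)) ^ s * 2 ^ (s / q) * (C₁ * ε) ^ (s / q) ≤ 1 / 2 := by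
    calc (ε ^ (α / n - 1 / γ)) ^ s * 2 ^ (s / q) * (C₁ * ε) ^ (s / q)
        = (2 * C₁) ^ (s / q) * ε ^ ((α / n - 1 / γ) * s + s / q) := by
          rw [← Real.rpow_mul hε0.le, Real.mul_rpow zero_le_two hC₁.le,
            Real.mul_rpow hC₁.le hε0.le, Real.rpow_add hε0]
          ring
      _ ≤ 1 / 2 := hεp
  set A := ε ^ (α / n - 1 / γ)
  set B := ε ^ (θ * (1 - 1 / γ))
  refine ⟨(2 * (A ^ s * 2 ^ (s / q) * B ^ (-s))) ^ (1 / s), by positivity, fun hfin ↦ ?_⟩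
  refine lorentzNorm_le_of_lorentzIntegral_le hs (by positivity) ?_
  exact lorentzIntegral_le_of_goodLambda (distributionFunction_antitone Ω F).measurable
    (by positivity) (by positivity) (by positivity) (by positivity)
    (fun t ht ↦ distributionFunction_le_of_goodLambda hF0 (hgood ε hε t ht)) hcoeff
    (lorentzIntegral_ne_top_of_lorentzNorm_ne_top hq hs hfin)

/-- Good-λ level-set inequalities imply Lorentz-norm bounds (derivation of Theorem 1.2
from Theorem 1.1 of the paper). -/
theorem goodLambda_to_lorentz (n : ℕ) (hn : 2 ≤ n) (γ θ α ε₀ C₁ : ℝ)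
    (hγ : 1 < γ) (hθ : 2 ≤ θ) (hα0 : 0 ≤ α) (hα : α < n / γ)
    (hε₀ : ε₀ ∈ Set.Ioo (0 : ℝ) 1) (hC₁ : 0 < C₁)
    (Ω : Set (EuclideanSpace ℝ (Fin n))) (hΩ : MeasurableSet Ω)
    (F G : EuclideanSpace ℝ (Fin n) → ℝ) (hF0 : ∀ x, 0 ≤ F x) (hG0 : ∀ x, 0 ≤ G x)
    (hFmeas : Measurable F) (hGmeas : Measurable G)
    (hgood : ∀ ε ∈ Set.Ioo (0 : ℝ) ε₀, ∀ lam : ℝ, 0 < lam →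
      volume {ζ ∈ Ω | ε ^ (α / n - 1 / γ) * lam < F ζ ∧ G ζ ≤ ε ^ (θ * (1 - 1 / γ)) * lam}
        ≤ ENNReal.ofReal (C₁ * ε) * volume {ζ ∈ Ω | lam < F ζ}) :
    ∀ q s : ℝ, 0 < q → q < n * γ / (n - α * γ) → 0 < s →
      ∃ C₂ : ℝ, 0 < C₂ ∧
        (lorentzNorm Ω q s F ≠ ⊤ →
          lorentzNorm Ω q s F ≤ ENNReal.ofReal C₂ * lorentzNorm Ω q s G) :=
  goodLambda_to_lorentz_general n hn γ θ α ε₀ C₁ hγ hα hε₀ hC₁ Ω F G hF0 hgood
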